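/- Assume that for every i one has Σ_{j=1}^{N} r_{ij} v_{ij} = −(1/12) Σ_{j=1}^{N} r_{ij} h_i/h_j − 2 C h_i², and that for all i ≠ j one has θ_{ij} h_j/h_i + θ_{ji} h_i/h_j = 12 r_{ij}² + Σ_{l=1}^{N} ( r_{il} r_{jl} h_i h_j / h_l² − r_{ij} r_{il} h_j / h_l − r_{ij} r_{jl} h_i / h_l ) − 48 C r_{ij} h_i h_j (the two identities expressing condition (C2) in canonical coordinates). Then G_{ij}^{(2)} = 0 for all i ≠ j. -/

import Mathlib

/-!
Since `r` agrees with `γ` off the diagonal, every `k`-sum in `G` can be rewritten through the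
three sums `Aᵢ = ∑ₖ rᵢₖ / hₖ`, `Aⱼ` and `D = ∑ₖ rᵢₖ rⱼₖ / hₖ²`, the correction terms at `k = i, j`
being multiples of `rᵢᵢ` and `rⱼⱼ`. The first (C2) identity expresses `Hⱼ` through `Aⱼ`
(because `∑ₖ rⱼₖ vⱼₖ = -2 Hⱼ`), and the second expresses `θᵢⱼ / hᵢ² + θⱼᵢ / hⱼ²` through `Aᵢ`, `Aⱼ`
and `D`. After these substitutions the terms in `rᵢᵢ`, `rⱼⱼ`, `Aᵢ`, `D` and `C` cancel in pairs.
-/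

open Finset

variable {ι : Type*} [Fintype ι]

section OffDiagonal

variable {γ r : ι → ι → ℝ}

theorem sum_div_eq_sum_div_sub_diag (h : ι → ℝ) (i : ι) (hγd : γ i i = 0)
    (hr : ∀ k, i ≠ k → r i k = γ i k) :
    ∑ k, γ i k / h k = ∑ k, r i k / h k - r i i / h i := by
  have hdiff : ∑ k, (r i k / h k - γ i k / h k) = r i i / h i := by
    rw [sum_eq_single i (fun k _ hk => by rw [hr k hk.symm, sub_self]) (by simp), hγd]
    ring
  rw [← hdiff, sum_sub_distrib]
  ring

theorem sum_mul_div_sq_eq_sum_mul_div_sq_sub_diag [DecidableEq ι] (h : ι → ℝ) {i j : ι}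
    (hij : i ≠ j) (hγs : ∀ i j, γ i j = γ j i) (hγd : ∀ i, γ i i = 0)
    (hr : ∀ i j, i ≠ j → r i j = γ i j) :
    ∑ k, γ i k * γ j k / h k ^ 2
      = ∑ k, r i k * r j k / h k ^ 2 - γ i j * (r i i / h i ^ 2 + r j j / h j ^ 2) := by
  have hdiff : ∑ k, (r i k * r j k / h k ^ 2 - γ i k * γ j k / h k ^ 2)
      = γ i j * (r i i / h i ^ 2 + r j j / h j ^ 2) := by
    rw [← sum_subset (subset_univ {i, j}), sum_pair hij, hr i j hij, hr j i hij.symm, hγs j i,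
      hγd i, hγd j]
    · ring
    · intro k _ hk
      simp only [mem_insert, mem_singleton, not_or] at hk
      rw [hr i k (Ne.symm hk.1), hr j k (Ne.symm hk.2), sub_self]
  rw [← hdiff, sum_sub_distrib]
  ring

theorem sum_mul_sub_mul_eq_neg_sum_erase [DecidableEq ι] (u : ι → ℝ) (j : ι)
    (hr : ∀ k, j ≠ k → r j k = γ j k) :
    ∑ k, r j k * ((u k - u j) * r j k) = -∑ k ∈ univ.erase j, (u j - u k) * γ j k ^ 2 := by
  rw [← sum_erase_add _ _ (mem_univ j), sub_self, zero_mul, mul_zero, add_zero, ← sum_neg_distrib]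
  refine sum_congr rfl fun k hk => ?_
  rw [hr k (ne_of_mem_erase hk).symm]
  ring

end OffDiagonal

theorem H_eq_of_sum_mul_v_eq [DecidableEq ι] {γ r v : ι → ι → ℝ} (u h H : ι → ℝ) (C : ℝ) (j : ι)
    (hr : ∀ k, j ≠ k → r j k = γ j k) (hv : ∀ k, v j k = (u k - u j) * r j k)
    (hH : H j = (1 / 2) * ∑ k ∈ univ.erase j, (u j - u k) * γ j k ^ 2)
    (hC2a : ∑ k, r j k * v j k = -(1 / 12) * ∑ k, r j k * h j / h k - 2 * C * h j ^ 2) :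
    H j = h j * (∑ k, r j k / h k) / 24 + C * h j ^ 2 := by
  have hA : ∑ k, r j k * h j / h k = h j * ∑ k, r j k / h k := by
    rw [mul_sum]
    exact sum_congr rfl fun k _ => by ring
  simp only [hv, sum_mul_sub_mul_eq_neg_sum_erase u j hr, hA] at hC2a
  rw [hH]
  linear_combination (-1 / 2 : ℝ) * hC2a

theorem sum_C2b_eq (r : ι → ι → ℝ) (h : ι → ℝ) (i j : ι) :
    ∑ l, (r i l * r j l * h i * h j / h l ^ 2 - r i j * r i l * h j / h l
        - r i j * r j l * h i / h l)
      = h i * h j * ∑ l, r i l * r j l / h l ^ 2 - r i j * h j * ∑ l, r i l / h l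
        - r i j * h i * ∑ l, r j l / h l := by
  simp only [mul_sum, ← sum_sub_distrib]
  exact sum_congr rfl fun l _ => by ring

theorem theta_div_sq_add_theta_div_sq_eq {r θ : ι → ι → ℝ} (h : ι → ℝ) (C : ℝ) (i j : ι)
    (hi : h i ≠ 0) (hj : h j ≠ 0)
    (hC2b : θ i j * h j / h i + θ j i * h i / h j
      = 12 * r i j ^ 2
        + ∑ l, (r i l * r j l * h i * h j / h l ^ 2
            - r i j * r i l * h j / h l - r i j * r j l * h i / h l)
        - 48 * C * r i j * h i * h j) :
    θ i j / h i ^ 2 + θ j i / h j ^ 2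
      = 12 * r i j ^ 2 / (h i * h j) + ∑ l, r i l * r j l / h l ^ 2
        - r i j * (∑ l, r i l / h l) / h i - r i j * (∑ l, r j l / h l) / h j
        - 48 * C * r i j := by
  rw [sum_C2b_eq] at hC2b
  field_simp at hC2b ⊢
  linear_combination hC2b

theorem sum_G_eq [DecidableEq ι] {γ r : ι → ι → ℝ} (h : ι → ℝ) {i j : ι} (hij : i ≠ j)
    (hγs : ∀ i j, γ i j = γ j i) (hγd : ∀ i, γ i i = 0) (hr : ∀ i j, i ≠ j → r i j = γ i j) :
    ∑ k, (γ i j * γ i k * γ j k / (5760 * h k ^ 2)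
        + (γ i j ^ 2 / (5760 * h k)) * (γ j k / h j - γ i k / h i))
      = γ i j / 5760 * (∑ k, r i k * r j k / h k ^ 2 - γ i j * (r i i / h i ^ 2 + r j j / h j ^ 2))
        + γ i j ^ 2 / (5760 * h j) * (∑ k, r j k / h k - r j j / h j)
        - γ i j ^ 2 / (5760 * h i) * (∑ k, r i k / h k - r i i / h i) := by
  rw [← sum_mul_div_sq_eq_sum_mul_div_sq_sub_diag h hij hγs hγd hr,
    ← sum_div_eq_sum_div_sub_diag h j (hγd j) (hr j),
    ← sum_div_eq_sum_div_sub_diag h i (hγd i) (hr i)]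
  simp only [mul_sum, ← sum_sub_distrib, ← sum_add_distrib]
  exact sum_congr rfl fun k _ => by ring

theorem Gij_vanishes_general (N : ℕ)
    (u : Fin N → ℝ)
    (h : Fin N → ℝ) (hh : ∀ i, h i ≠ 0)
    (C : ℝ)
    (γ : Fin N → Fin N → ℝ) (hγs : ∀ i j, γ i j = γ j i) (hγd : ∀ i, γ i i = 0)
    (r : Fin N → Fin N → ℝ)
    (hroff : ∀ i j, i ≠ j → r i j = γ i j)
    (v : Fin N → Fin N → ℝ) (hv : ∀ i j, v i j = (u j - u i) * r i j)
    (θ : Fin N → Fin N → ℝ)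
    (H : Fin N → ℝ)
    (hH : ∀ i, H i = (1 / 2) * ∑ j ∈ Finset.univ.erase i, (u i - u j) * γ i j ^ 2)
    (G : Fin N → Fin N → ℝ)
    (hG : ∀ i j, i ≠ j →
      G i j = -(γ i j ^ 2 * H j) / (120 * h j ^ 2)
        + γ i j ^ 3 / (480 * h i * h j)
        - (γ i j / 5760) * ((r i i * r i j + θ i j) / h i ^ 2
            + (r j j * r i j + θ j i) / h j ^ 2)
        + (γ i j ^ 2 / 5760) * ((r i i * h i) / h i ^ 3 + 3 * (r j j * h j) / h j ^ 3)
        + ∑ k, (γ i j * γ i k * γ j k / (5760 * h k ^ 2)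
            + (γ i j ^ 2 / (5760 * h k)) * (γ j k / h j - γ i k / h i)))
    (hC2a : ∀ i, ∑ j, r i j * v i j
      = -(1 / 12) * ∑ j, r i j * h i / h j - 2 * C * h i ^ 2)
    (hC2b : ∀ i j, i ≠ j →
      θ i j * h j / h i + θ j i * h i / h j
        = 12 * r i j ^ 2
          + ∑ l, (r i l * r j l * h i * h j / h l ^ 2
              - r i j * r i l * h j / h l - r i j * r j l * h i / h l)
          - 48 * C * r i j * h i * h j) :
    ∀ i j, i ≠ j → G i j = 0 := by
  intro i j hij
  have hHj := H_eq_of_sum_mul_v_eq u h H C j (hroff j) (hv j) (hH j) (hC2a j)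
  have hθsum := theta_div_sq_add_theta_div_sq_eq h C i j (hh i) (hh j) (hC2b i j hij)
  rw [hroff i j hij] at hθsum
  have hsplit : (r i i * γ i j + θ i j) / h i ^ 2 + (r j j * γ i j + θ j i) / h j ^ 2
      = r i i * γ i j / h i ^ 2 + r j j * γ i j / h j ^ 2
        + (θ i j / h i ^ 2 + θ j i / h j ^ 2) := by
    ring
  rw [hG i j hij, sum_G_eq h hij hγs hγd hroff, hroff i j hij, hHj, hsplit, hθsum]
  have hi := hh i
  have hj := hh j
  field_simp
  ring

/-- Under the two identities expressing condition (C2) in canonical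
coordinates, the coefficient `G i j` of the genus-2 G-function vanishes for
all `i ≠ j`. -/
theorem Gij_vanishes (N : ℕ) (hN : 2 ≤ N)
    (u : Fin N → ℝ) (hu : Function.Injective u)
    (h : Fin N → ℝ) (hh : ∀ i, h i ≠ 0)
    (C : ℝ)
    (γ : Fin N → Fin N → ℝ) (hγs : ∀ i j, γ i j = γ j i) (hγd : ∀ i, γ i i = 0)
    (r : Fin N → Fin N → ℝ)
    (hroff : ∀ i j, i ≠ j → r i j = γ i j)
    (hrdiag : ∀ i, r i i = -(∑ j ∈ Finset.univ.erase i, γ i j * h j) / h i)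
    (v : Fin N → Fin N → ℝ) (hv : ∀ i j, v i j = (u j - u i) * r i j)
    (θ : Fin N → Fin N → ℝ)
    (hθ : ∀ i j, i ≠ j → θ i j = (u j - u i)⁻¹ * (r i j + ∑ k, r i k * v j k))
    (H : Fin N → ℝ)
    (hH : ∀ i, H i = (1 / 2) * ∑ j ∈ Finset.univ.erase i, (u i - u j) * γ i j ^ 2)
    (G : Fin N → Fin N → ℝ)
    (hG : ∀ i j, i ≠ j →
      G i j = -(γ i j ^ 2 * H j) / (120 * h j ^ 2)
        + γ i j ^ 3 / (480 * h i * h j)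
        - (γ i j / 5760) * ((r i i * r i j + θ i j) / h i ^ 2
            + (r j j * r i j + θ j i) / h j ^ 2)
        + (γ i j ^ 2 / 5760) * ((r i i * h i) / h i ^ 3 + 3 * (r j j * h j) / h j ^ 3)
        + ∑ k, (γ i j * γ i k * γ j k / (5760 * h k ^ 2)
            + (γ i j ^ 2 / (5760 * h k)) * (γ j k / h j - γ i k / h i)))
    (hC2a : ∀ i, ∑ j, r i j * v i j
      = -(1 / 12) * ∑ j, r i j * h i / h j - 2 * C * h i ^ 2)
    (hC2b : ∀ i j, i ≠ j →
      θ i j * h j / h i + θ j i * h i / h j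
        = 12 * r i j ^ 2
          + ∑ l, (r i l * r j l * h i * h j / h l ^ 2
              - r i j * r i l * h j / h l - r i j * r j l * h i / h l)
          - 48 * C * r i j * h i * h j) :
    ∀ i j, i ≠ j → G i j = 0 :=
  Gij_vanishes_general N u h hh C γ hγs hγd r hroff v hv θ H hH G hG hC2a hC2b
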